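/- Case A of the proof of Theorem 1: Let P₁, P₂, P₃, P₄, P₅, P₆, a, b, c, d, e, f be twelve pairwise distinct points of V satisfying the 23 stitching relations, and suppose q(P₂ − P₁) = 0 or q(P₄ − P₃) = 0. Then all twelve points lie on one common line whose direction vector is lightlike (q of the direction is 0), and in particular q(f − P₆) = 0. -/
import Mathlib


noncomputable section

/-- Minkowski quadratic form on `ℝ³` with coordinates `(t, x, y)` indexed `0, 1, 2`. -/
def q (v : Fin 3 → ℝ) : ℝ := -(v 0)^2 + (v 1)^2 + (v 2)^2

/-- Polar bilinear form of `q`. -/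
def mbil (v w : Fin 3 → ℝ) : ℝ := -(v 0) * (w 0) + (v 1) * (w 1) + (v 2) * (w 2)

/-- The 23 stitching relations among twelve points. -/
def Stitch (P₁ P₂ P₃ P₄ P₅ P₆ a b c d e f : Fin 3 → ℝ) : Prop :=
  q (a - P₁) = 0 ∧ q (a - P₂) = 0 ∧ q (a - P₃) = 0 ∧ q (a - P₄) = 0 ∧
  q (b - P₁) = 0 ∧ q (b - P₂) = 0 ∧ q (b - P₃) = 0 ∧ q (b - P₄) = 0 ∧
  q (c - P₁) = 0 ∧ q (c - P₂) = 0 ∧ q (c - P₅) = 0 ∧ q (c - P₆) = 0 ∧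
  q (d - P₁) = 0 ∧ q (d - P₂) = 0 ∧ q (d - P₅) = 0 ∧ q (d - P₆) = 0 ∧
  q (e - P₃) = 0 ∧ q (e - P₄) = 0 ∧ q (e - P₅) = 0 ∧ q (e - P₆) = 0 ∧
  q (f - P₃) = 0 ∧ q (f - P₄) = 0 ∧ q (f - P₅) = 0

lemma q_smul (t : ℝ) (v : Fin 3 → ℝ) : q (t • v) = t^2 * q v := by
  simp only [q, Pi.smul_apply, smul_eq_mul]; ring

lemma q_sub_expand (u w : Fin 3 → ℝ) : q (u - w) = q u + q w - 2 * mbil u w := by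
  simp only [q, mbil, Pi.sub_apply]; ring

lemma q_sub_comm (u w : Fin 3 → ℝ) : q (u - w) = q (w - u) := by
  simp only [q, Pi.sub_apply]; ring

/-- Two orthogonal null vectors in Minkowski 3-space are linearly dependent. -/
lemma null_dep (u w : Fin 3 → ℝ) (hu : q u = 0) (hw : q w = 0) (hb : mbil u w = 0) :
    u = 0 ∨ ∃ l : ℝ, w = l • u := by
  simp only [q, mbil] at hu hw hb
  by_cases h0 : u 0 = 0
  · left
    have h1 : u 1 = 0 := by nlinarith [sq_nonneg (u 1), sq_nonneg (u 2)]
    have h2 : u 2 = 0 := by nlinarith [sq_nonneg (u 1), sq_nonneg (u 2)]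
    funext i; fin_cases i <;> simp [h0, h1, h2]
  · right
    refine ⟨w 0 / u 0, ?_⟩
    have h3 : u 1 * w 2 - u 2 * w 1 = 0 := by
      have h : (u 1 * w 2 - u 2 * w 1)^2 = 0 := by
        linear_combination (w 1^2 + w 2^2) * hu + (u 0)^2 * hw -
          (u 1 * w 1 + u 2 * w 2 + u 0 * w 0) * hb
      exact pow_eq_zero_iff two_ne_zero |>.mp h
    have h4 : w 1 * u 0 = w 0 * u 1 := by
      have h : (w 1 * u 0 - w 0 * u 1)^2 = 0 := by
        linear_combination -(w 1^2) * hu - (u 1^2) * hw + (2 * u 1 * w 1) * hb +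
          (u 1 * w 2 - u 2 * w 1) * h3
      have := pow_eq_zero_iff two_ne_zero |>.mp h
      linarith
    have h5 : w 2 * u 0 = w 0 * u 2 := by
      have h : (w 2 * u 0 - w 0 * u 2)^2 = 0 := by
        linear_combination -(w 2^2) * hu - (u 2^2) * hw + (2 * u 2 * w 2) * hb +
          (u 1 * w 2 - u 2 * w 1) * h3
      have := pow_eq_zero_iff two_ne_zero |>.mp h
      linarith
    funext i
    fin_cases i <;> simp [Pi.smul_apply, smul_eq_mul] <;> field_simp <;> linarith

/-- A point lightlike-related to two distinct points of a lightlike line lies on the line. -/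
lemma step (X v A B P : Fin 3 → ℝ) (hv : q v = 0) (sA sB : ℝ)
    (hA : A = X + sA • v) (hB : B = X + sB • v) (hAB : A ≠ B) (hPA : P ≠ A)
    (h1 : q (P - A) = 0) (h2 : q (P - B) = 0) : ∃ s : ℝ, P = X + s • v := by
  have hBAv : B - A = (sB - sA) • v := by rw [hA, hB, sub_smul]; abel
  have hBA : q (B - A) = 0 := by rw [hBAv, q_smul, hv, mul_zero]
  have hbil : mbil (P - A) (P - B) = 0 := by
    have h := q_sub_expand (P - A) (P - B)
    have hww : (P - A) - (P - B) = B - A := by abel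
    rw [hww, hBA, h1, h2] at h; linarith
  rcases null_dep _ _ h1 h2 hbil with h0 | ⟨l, hl⟩
  · exact absurd (sub_eq_zero.mp h0) hPA
  · have hl1 : l ≠ 1 := by
      intro h
      rw [h, one_smul] at hl
      exact hAB (by have h2 := sub_right_injective hl.symm; exact h2)
    have hBA2 : (1 - l) • (P - A) = (sB - sA) • v := by
      rw [← hBAv, sub_smul, one_smul, ← hl]; abel
    have hne : (1 - l) ≠ 0 := sub_ne_zero.mpr (Ne.symm hl1)
    have hPAv : P - A = ((sB - sA) / (1 - l)) • v := by
      have := congrArg (fun x => (1 - l)⁻¹ • x) hBA2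
      simpa [smul_smul, inv_mul_cancel₀ hne, div_eq_inv_mul] using this
    refine ⟨sA + (sB - sA) / (1 - l), ?_⟩
    have : P = A + ((sB - sA) / (1 - l)) • v := by
      rw [← hPAv]; abel
    rw [this, hA, add_smul]; abel

/-- Case A of the proof of Theorem 1: if line 12 or line 34 is lightlike, then all
twelve points lie on one common lightlike line, and in particular `f ⌣ P₆`. -/
theorem caseA
    (P₁ P₂ P₃ P₄ P₅ P₆ a b c d e f : Fin 3 → ℝ)
    (hdist : List.Pairwise (· ≠ ·) [P₁, P₂, P₃, P₄, P₅, P₆, a, b, c, d, e, f])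
    (hst : Stitch P₁ P₂ P₃ P₄ P₅ P₆ a b c d e f)
    (hlight : q (P₂ - P₁) = 0 ∨ q (P₄ - P₃) = 0) :
    (∃ (X v : Fin 3 → ℝ), v ≠ 0 ∧ q v = 0 ∧
      ∀ p ∈ [P₁, P₂, P₃, P₄, P₅, P₆, a, b, c, d, e, f], ∃ s : ℝ, p = X + s • v) ∧
    q (f - P₆) = 0 := by
  simp only [List.pairwise_cons, List.mem_cons, List.not_mem_nil, or_false,
    forall_eq_or_imp, forall_eq, List.Pairwise.nil, and_true] at hdist
  obtain ⟨⟨h12,h13,h14,h15,h16,h1a,h1b,h1c,h1d,h1e,h1f⟩,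
        ⟨h23,h24,h25,h26,h2a,h2b,h2c,h2d,h2e,h2f⟩,
        ⟨h34,h35,h36,h3a,h3b,h3c,h3d,h3e,h3f⟩,
        ⟨h45,h46,h4a,h4b,h4c,h4d,h4e,h4f⟩,
        ⟨h56,h5a,h5b,h5c,h5d,h5e,h5f⟩,
        ⟨h6a,h6b,h6c,h6d,h6e,h6f⟩,
        ⟨hab,hac,had,hae,haf⟩,
        ⟨hbc,hbd,hbe,hbf⟩,
        ⟨hcd,hce,hcf⟩,
        ⟨hde,hdf⟩,
        hef⟩ := hdist
  obtain ⟨haP1,haP2,haP3,haP4, hbP1,hbP2,hbP3,hbP4, hcP1,hcP2,hcP5,hcP6,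
    hdP1,hdP2,hdP5,hdP6, heP3,heP4,heP5,heP6, hfP3,hfP4,hfP5⟩ := hst
  rcases hlight with hv | hv
  · -- Case 1 : base line through P₁, P₂
    have hvne : P₂ - P₁ ≠ 0 := sub_ne_zero.mpr (Ne.symm h12)
    have hP1 : P₁ = P₁ + (0:ℝ) • (P₂ - P₁) := by rw [zero_smul]; abel
    have hP2 : P₂ = P₁ + (1:ℝ) • (P₂ - P₁) := by rw [one_smul]; abel
    obtain ⟨sa, ha⟩ := step P₁ (P₂ - P₁) P₁ P₂ a hv 0 1 hP1 hP2 h12 (Ne.symm h1a) haP1 haP2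
    obtain ⟨sb, hb⟩ := step P₁ (P₂ - P₁) P₁ P₂ b hv 0 1 hP1 hP2 h12 (Ne.symm h1b) hbP1 hbP2
    obtain ⟨sc, hc⟩ := step P₁ (P₂ - P₁) P₁ P₂ c hv 0 1 hP1 hP2 h12 (Ne.symm h1c) hcP1 hcP2
    obtain ⟨sd, hd⟩ := step P₁ (P₂ - P₁) P₁ P₂ d hv 0 1 hP1 hP2 h12 (Ne.symm h1d) hdP1 hdP2
    obtain ⟨s3, h3⟩ := step P₁ (P₂ - P₁) a b P₃ hv sa sb ha hb hab h3a
      (by rwa [q_sub_comm]) (by rwa [q_sub_comm])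
    obtain ⟨s4, h4⟩ := step P₁ (P₂ - P₁) a b P₄ hv sa sb ha hb hab h4a
      (by rwa [q_sub_comm]) (by rwa [q_sub_comm])
    obtain ⟨s5, h5⟩ := step P₁ (P₂ - P₁) c d P₅ hv sc sd hc hd hcd h5c
      (by rwa [q_sub_comm]) (by rwa [q_sub_comm])
    obtain ⟨s6, h6⟩ := step P₁ (P₂ - P₁) c d P₆ hv sc sd hc hd hcd h6c
      (by rwa [q_sub_comm]) (by rwa [q_sub_comm])
    obtain ⟨se, he⟩ := step P₁ (P₂ - P₁) P₃ P₄ e hv s3 s4 h3 h4 h34 (Ne.symm h3e) heP3 heP4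
    obtain ⟨sf, hf⟩ := step P₁ (P₂ - P₁) P₃ P₄ f hv s3 s4 h3 h4 h34 (Ne.symm h3f) hfP3 hfP4
    have hfP6 : q (f - P₆) = 0 := by
      have h : f - P₆ = (sf - s6) • (P₂ - P₁) := by rw [hf, h6, sub_smul]; abel
      rw [h, q_smul, hv, mul_zero]
    refine ⟨⟨P₁, P₂ - P₁, hvne, hv, ?_⟩, hfP6⟩
    intro p hp
    simp only [List.mem_cons, List.not_mem_nil, or_false] at hp
    rcases hp with rfl|rfl|rfl|rfl|rfl|rfl|rfl|rfl|rfl|rfl|rfl|rfl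
    exacts [⟨0, hP1⟩, ⟨1, hP2⟩, ⟨s3, h3⟩, ⟨s4, h4⟩, ⟨s5, h5⟩, ⟨s6, h6⟩,
      ⟨sa, ha⟩, ⟨sb, hb⟩, ⟨sc, hc⟩, ⟨sd, hd⟩, ⟨se, he⟩, ⟨sf, hf⟩]
  · -- Case 2 : base line through P₃, P₄
    have hvne : P₄ - P₃ ≠ 0 := sub_ne_zero.mpr (Ne.symm h34)
    have hP3 : P₃ = P₃ + (0:ℝ) • (P₄ - P₃) := by rw [zero_smul]; abel
    have hP4 : P₄ = P₃ + (1:ℝ) • (P₄ - P₃) := by rw [one_smul]; abel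
    obtain ⟨sa, ha⟩ := step P₃ (P₄ - P₃) P₃ P₄ a hv 0 1 hP3 hP4 h34 (Ne.symm h3a) haP3 haP4
    obtain ⟨sb, hb⟩ := step P₃ (P₄ - P₃) P₃ P₄ b hv 0 1 hP3 hP4 h34 (Ne.symm h3b) hbP3 hbP4
    obtain ⟨se, he⟩ := step P₃ (P₄ - P₃) P₃ P₄ e hv 0 1 hP3 hP4 h34 (Ne.symm h3e) heP3 heP4
    obtain ⟨sf, hf⟩ := step P₃ (P₄ - P₃) P₃ P₄ f hv 0 1 hP3 hP4 h34 (Ne.symm h3f) hfP3 hfP4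
    obtain ⟨s1, h1⟩ := step P₃ (P₄ - P₃) a b P₁ hv sa sb ha hb hab h1a
      (by rwa [q_sub_comm]) (by rwa [q_sub_comm])
    obtain ⟨s2, h2⟩ := step P₃ (P₄ - P₃) a b P₂ hv sa sb ha hb hab h2a
      (by rwa [q_sub_comm]) (by rwa [q_sub_comm])
    obtain ⟨sc, hc⟩ := step P₃ (P₄ - P₃) P₁ P₂ c hv s1 s2 h1 h2 h12 (Ne.symm h1c) hcP1 hcP2
    obtain ⟨sd, hd⟩ := step P₃ (P₄ - P₃) P₁ P₂ d hv s1 s2 h1 h2 h12 (Ne.symm h1d) hdP1 hdP2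
    obtain ⟨s5, h5⟩ := step P₃ (P₄ - P₃) c d P₅ hv sc sd hc hd hcd h5c
      (by rwa [q_sub_comm]) (by rwa [q_sub_comm])
    obtain ⟨s6, h6⟩ := step P₃ (P₄ - P₃) c d P₆ hv sc sd hc hd hcd h6c
      (by rwa [q_sub_comm]) (by rwa [q_sub_comm])
    have hfP6 : q (f - P₆) = 0 := by
      have h : f - P₆ = (sf - s6) • (P₄ - P₃) := by rw [hf, h6, sub_smul]; abel
      rw [h, q_smul, hv, mul_zero]
    refine ⟨⟨P₃, P₄ - P₃, hvne, hv, ?_⟩, hfP6⟩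
    intro p hp
    simp only [List.mem_cons, List.not_mem_nil, or_false] at hp
    rcases hp with rfl|rfl|rfl|rfl|rfl|rfl|rfl|rfl|rfl|rfl|rfl|rfl
    exacts [⟨s1, h1⟩, ⟨s2, h2⟩, ⟨0, hP3⟩, ⟨1, hP4⟩, ⟨s5, h5⟩, ⟨s6, h6⟩,
      ⟨sa, ha⟩, ⟨sb, hb⟩, ⟨sc, hc⟩, ⟨sd, hd⟩, ⟨se, he⟩, ⟨sf, hf⟩]
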